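/- arXiv:1810.03749 — 4 statements merged into one kernel-verified Lean document; each statement's English description precedes it below -/
import Mathlib

section
/- Let d ≥ 1, let C_free ⊆ ℝ^d be a nonempty compact set, let ε > 0, and let μ be a Borel probability measure on ℝ^d such that μ(ball(q, ε/2)) > 0 for every q ∈ C_free. Let (X_n)_{n∈ℕ} be an i.i.d. sequence of random variables with common law μ on a probability space (Ω, P). Then P-almost surely there exists N ∈ ℕ such that for every q ∈ C_free there is some n ≤ N with dist(q, X_n) ≤ ε. -/
open MeasureTheory ProbabilityTheory Metric Filter

/-- For a single center `c` whose `ε/2`-ball is charged by `μ`, almost surely some sample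
lands in that ball. -/
theorem aux_hit_ball
    {E : Type*} [MeasurableSpace E] [PseudoMetricSpace E] [OpensMeasurableSpace E]
    (μ : Measure E)
    (Ω : Type*) [MeasurableSpace Ω]
    (P : Measure Ω) [IsProbabilityMeasure P]
    (X : ℕ → Ω → E)
    (hindep : iIndepFun X P)
    (hmeas : ∀ n, Measurable (X n))
    (hlaw : ∀ n, Measure.map (X n) P = μ)
    (c : E) (r : ℝ) (hr : 0 < μ (ball c r)) :
    ∀ᵐ ω ∂P, ∃ n, X n ω ∈ ball c r := by
  set s : ℕ → Set Ω := fun n => X n ⁻¹' ball c r with hs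
  have hsm : ∀ n, MeasurableSet (s n) := fun n => (hmeas n) measurableSet_ball
  have hPs : ∀ n, P (s n) = μ (ball c r) := by
    intro n
    rw [hs]
    rw [← hlaw n, Measure.map_apply (hmeas n) measurableSet_ball]
  have hindepS : iIndepSet s P := by
    rw [iIndepSet_iff_meas_biInter hsm]
    intro t
    exact hindep.measure_inter_preimage_eq_mul t (fun i _ => measurableSet_ball)
  have htsum : (∑' n, P (s n)) = ⊤ := by
    simp_rw [hPs]
    exact ENNReal.tsum_const_eq_top_of_ne_zero hr.ne'
  have hlim := measure_limsup_eq_one hsm hindepS htsum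
  have : ∀ᵐ ω ∂P, ω ∈ limsup s atTop := by
    rw [ae_iff_measure_eq]
    · simpa using hlim
    · exact (MeasurableSet.measurableSet_limsup hsm).nullMeasurableSet
  filter_upwards [this] with ω hω
  have hfreq : ∃ᶠ n in atTop, ω ∈ s n := Filter.mem_limsup_iff_frequently_mem.1 hω
  exact hfreq.exists

set_option maxHeartbeats 1000000 in
/-- If `C_free` is nonempty compact, `μ` charges every `ε/2`-ball centered in `C_free`, and
`(X n)` is i.i.d. with law `μ`, then almost surely some finite prefix of the samples is
`ε`-dense in `C_free`. -/
theorem iid_samples_eventually_eps_cover_compact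
    (d : ℕ) (hd : 1 ≤ d)
    (Cfree : Set (EuclideanSpace ℝ (Fin d)))
    (hne : Cfree.Nonempty) (hcomp : IsCompact Cfree)
    (ε : ℝ) (hε : 0 < ε)
    (μ : Measure (EuclideanSpace ℝ (Fin d))) [IsProbabilityMeasure μ]
    (hμ : ∀ q ∈ Cfree, 0 < μ (ball q (ε / 2)))
    (Ω : Type*) [MeasurableSpace Ω]
    (P : Measure Ω) [IsProbabilityMeasure P]
    (X : ℕ → Ω → EuclideanSpace ℝ (Fin d))
    (hindep : iIndepFun X P)
    (hmeas : ∀ n, Measurable (X n))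
    (hlaw : ∀ n, Measure.map (X n) P = μ) :
    ∀ᵐ ω ∂P, ∃ N : ℕ, ∀ q ∈ Cfree, ∃ n ≤ N, dist q (X n ω) ≤ ε := by
  obtain ⟨t, htC, hcov⟩ := hcomp.elim_nhds_subcover (fun q => ball q (ε / 2))
    (fun q _ => ball_mem_nhds q (by linarith))
  have hae : ∀ᵐ ω ∂P, ∀ c ∈ (t : Set _), ∃ n, X n ω ∈ ball c (ε / 2) := by
    rw [ae_ball_iff t.countable_toSet]
    intro c hc
    exact aux_hit_ball μ Ω P X hindep hmeas hlaw c (ε / 2) (hμ c (htC c hc))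
  filter_upwards [hae] with ω hω
  choose f hf using hω
  refine ⟨t.attach.sup fun c => f c.1 (Finset.mem_coe.mpr c.2), ?_⟩
  intro q hq
  obtain ⟨c, hct0, hqc⟩ := Set.mem_iUnion₂.1 (hcov hq)
  have hct : c ∈ (t : Set _) := hct0
  refine ⟨f c hct,
    Finset.le_sup (f := fun c : t => f c.1 (Finset.mem_coe.mpr c.2))
      (Finset.mem_attach _ ⟨c, hct0⟩), ?_⟩
  have h1 : dist q c < ε / 2 := mem_ball.1 hqc
  have h2 : dist (X (f c hct) ω) c < ε / 2 := mem_ball.1 (hf c hct)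
  calc dist q (X (f c hct) ω) ≤ dist q c + dist c (X (f c hct) ω) := dist_triangle _ _ _
    _ ≤ ε := by rw [dist_comm c]; linarith
end

section
/- Let d ≥ 1, let C_free ⊆ ℝ^d be a measurable set with 0 < volume(C_free) < ∞, and let μ be the uniform probability measure on C_free (the restriction of the Lebesgue measure to C_free, normalized by volume(C_free)). Let (X_n)_{n∈ℕ} be an i.i.d. sequence of random variables with common law μ on a probability space (Ω, P), and let ε > 0. Then P-almost surely, volume(C_free \ ⋃_{n∈ℕ} ball(X_n, ε)) = 0. -/
open MeasureTheory ProbabilityTheory Metric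

/-- For samples drawn i.i.d. from the uniform distribution on a measurable set `C_free`
of positive finite volume, almost surely the `ε`-balls around the samples cover `C_free`
up to a Lebesgue-null set. -/
theorem uniform_iid_samples_cover_up_to_null
    (d : ℕ) (hd : 1 ≤ d)
    (Cfree : Set (EuclideanSpace ℝ (Fin d)))
    (hCmeas : MeasurableSet Cfree)
    (hpos : 0 < volume Cfree) (hfin : volume Cfree < ⊤)
    (μ : Measure (EuclideanSpace ℝ (Fin d)))
    (hμ : μ = (volume Cfree)⁻¹ • volume.restrict Cfree)
    (Ω : Type*) [MeasurableSpace Ω]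
    (P : Measure Ω) [IsProbabilityMeasure P]
    (X : ℕ → Ω → EuclideanSpace ℝ (Fin d))
    (hindep : iIndepFun X P)
    (hmeas : ∀ n, Measurable (X n))
    (hlaw : ∀ n, Measure.map (X n) P = μ)
    (ε : ℝ) (hε : 0 < ε) :
    ∀ᵐ ω ∂P, volume (Cfree \ ⋃ n : ℕ, ball (X n ω) ε) = 0 := by
  set ν : Measure (EuclideanSpace ℝ (Fin d)) := volume.restrict Cfree with hν
  haveI : IsFiniteMeasure ν := ⟨by rw [hν, Measure.restrict_apply_univ]; exact hfin⟩
  -- The bad product set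
  set S : Set (Ω × EuclideanSpace ℝ (Fin d)) :=
    ⋂ n, {p : Ω × EuclideanSpace ℝ (Fin d) | ε ≤ dist p.2 (X n p.1)} with hS
  have hSmeas : MeasurableSet S := by
    refine MeasurableSet.iInter fun n => ?_
    exact measurableSet_le measurable_const
      (measurable_snd.dist ((hmeas n).comp measurable_fst))
  -- Step A: ν-a.e. point has a ball with positive intersection
  have hA : ∀ᵐ x ∂ν, volume (Cfree ∩ ball x ε) ≠ 0 := by
    have hnull : ν {x | volume (Cfree ∩ ball x ε) = 0} = 0 := by
      apply measure_null_of_locally_null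
      intro x hx
      refine ⟨ball x ε, Filter.mem_inf_of_left (ball_mem_nhds x hε), ?_⟩
      rw [hν, Measure.restrict_apply measurableSet_ball, Set.inter_comm]
      exact hx
    filter_upwards [measure_eq_zero_iff_ae_notMem.mp hnull] with x hx using hx
  -- Step B: for each such point, a.s. some sample falls in its ε-ball
  have hB : ∀ x : EuclideanSpace ℝ (Fin d), volume (Cfree ∩ ball x ε) ≠ 0 →
      P {ω | ∀ n, ε ≤ dist x (X n ω)} = 0 := by
    intro x hx
    set s : ℕ → Set Ω := fun n => X n ⁻¹' ball x ε with hs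
    have hsm : ∀ n, MeasurableSet (s n) := fun n => (hmeas n) measurableSet_ball
    have hmeasn : ∀ n, P (s n) = μ (ball x ε) := fun n => by
      rw [hs]
      rw [← Measure.map_apply (hmeas n) measurableSet_ball, hlaw n]
    have hc : μ (ball x ε) ≠ 0 := by
      rw [hμ]
      simp only [Measure.smul_apply, smul_eq_mul,
        Measure.restrict_apply measurableSet_ball]
      refine mul_ne_zero (ENNReal.inv_ne_zero.mpr hfin.ne) ?_
      rwa [hν, Measure.restrict_apply measurableSet_ball, Set.inter_comm]
    have hiid : iIndepSet s P := by
      rw [iIndepSet_iff_meas_biInter hsm]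
      intro t
      exact hindep.measure_inter_preimage_eq_mul t (sets := fun _ => ball x ε) (fun i _ => measurableSet_ball)
    have htsum : (∑' n, P (s n)) = ⊤ := by
      simp_rw [hmeasn]
      exact ENNReal.tsum_const_eq_top_of_ne_zero hc
    have hBC := measure_limsup_eq_one hsm hiid htsum
    have hsub : Filter.limsup s Filter.atTop ⊆ ⋃ n, s n := by
      rw [Filter.limsup_eq_iInf_iSup_of_nat]
      exact fun y hy => by simpa using Set.mem_iInter.mp hy 0
    have hunion : P (⋃ n, s n) = 1 :=
      le_antisymm prob_le_one (hBC ▸ measure_mono hsub)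
    have hcompl : P ((⋃ n, s n)ᶜ) = 0 := by
      rw [measure_compl (MeasurableSet.iUnion hsm) (measure_ne_top P _), hunion]
      simp
    refine measure_mono_null (fun ω hω => ?_) hcompl
    simp only [Set.mem_compl_iff, Set.mem_iUnion, not_exists]
    intro n hn
    rw [hs] at hn
    simp only [Set.mem_preimage, mem_ball] at hn
    exact absurd (by rwa [dist_comm]) (not_lt.mpr (hω n))
  -- Step C: Fubini
  have hprod : (P.prod ν) S = 0 := by
    rw [Measure.prod_apply_symm hSmeas]
    have h0 : (fun x => P ((fun ω => (ω, x)) ⁻¹' S)) =ᵐ[ν] 0 := by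
      filter_upwards [hA] with x hx
      have hpre : ((fun ω => (ω, x)) ⁻¹' S) = {ω | ∀ n, ε ≤ dist x (X n ω)} := by
        ext ω; simp [hS]
      rw [hpre]
      exact hB x hx
    rw [lintegral_congr_ae h0]; simp
  have hae := (Measure.measure_prod_null hSmeas).mp hprod
  filter_upwards [hae] with ω hω
  have hslice : Prod.mk ω ⁻¹' S = {x : EuclideanSpace ℝ (Fin d) | ∀ n, ε ≤ dist x (X n ω)} := by
    ext x; simp [hS]
  rw [hslice] at hω
  have hkey : Cfree \ ⋃ n : ℕ, ball (X n ω) ε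
      = {x : EuclideanSpace ℝ (Fin d) | ∀ n, ε ≤ dist x (X n ω)} ∩ Cfree := by
    ext x
    simp only [Set.mem_diff, Set.mem_iUnion, mem_ball, Set.mem_inter_iff,
      Set.mem_setOf_eq, not_exists, not_lt]
    tauto
  have hνz : ν {x : EuclideanSpace ℝ (Fin d) | ∀ n, ε ≤ dist x (X n ω)} = 0 := hω
  rw [hν, Measure.restrict_apply] at hνz
  · rw [hkey]; exact hνz
  · rw [Set.setOf_forall]
    refine MeasurableSet.iInter fun n => ?_
    exact measurableSet_le measurable_const (measurable_id.dist measurable_const)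
end

section
/- Let d ≥ 1, let C_free ⊆ ℝ^d, let σ : [0,1] → ℝ^d be a continuous path with clearance δ > 0 in C_free, and let ε > 0 with 2ε ≤ δ. Let S ⊆ ℝ^d be a set that is ε-dense along the path, i.e., for every t ∈ [0,1] there exists s ∈ S with dist(σ(t), s) ≤ ε. Then there exist m ∈ ℕ and points s₀, s₁, …, s_m ∈ S such that dist(s₀, σ(0)) ≤ ε, dist(s_m, σ(1)) ≤ ε, and for every i < m the closed segment [s_i, s_{i+1}] is contained in C_free. (This is the deterministic geometric core of the paper's Theorem 4, 'Joining of d-trees': once the sampled nodes are sufficiently dense along a feasible path, the disjointed trees containing nodes near the two endpoints can be joined through a chain of collision-free segments.) -/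
open Set Metric

/-! Sample the path at the points `i / m` of a partition of `[0, 1]` fine enough that, by uniform
continuity, consecutive samples are less than `ε` apart, and pick a point of `S` within `ε` of each
sample. Two consecutive chosen points then lie in the closed ball of radius `2ε ≤ δ` around the
earlier sample, which is contained in `C_free`, so by convexity of the ball the segment joining
them is collision free. -/

lemma natCast_div_mem_Icc {m : ℕ} (i : Fin (m + 1)) : (i : ℝ) / m ∈ Icc (0 : ℝ) 1 :=
  ⟨by positivity, div_le_one_of_le₀ (by exact_mod_cast Nat.lt_succ_iff.mp i.isLt) m.cast_nonneg⟩

lemma exists_dist_uniform_partition_lt {α : Type*} [PseudoMetricSpace α] {σ : ℝ → α}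
    (hσ : ContinuousOn σ (Icc 0 1)) {ε : ℝ} (hε : 0 < ε) :
    ∃ m : ℕ, 0 < m ∧
      ∀ i : Fin m, dist (σ ((i.castSucc : ℕ) / m)) (σ ((i.succ : ℕ) / m)) < ε := by
  obtain ⟨η, hη, hση⟩ :=
    Metric.uniformContinuousOn_iff.mp (isCompact_Icc.uniformContinuousOn_of_continuous hσ) ε hε
  obtain ⟨n, hn⟩ := exists_nat_one_div_lt hη
  refine ⟨n + 1, n.succ_pos, fun i => ?_⟩
  have hstep : dist ((i.castSucc : ℕ) / (n + 1 : ℕ) : ℝ) ((i.succ : ℕ) / (n + 1 : ℕ)) < η := by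
    rw [Real.dist_eq, abs_sub_comm, Fin.val_succ, Fin.val_castSucc, ← sub_div]
    push_cast
    rwa [add_sub_cancel_left, abs_of_pos (by positivity)]
  exact hση _ (natCast_div_mem_Icc _) _ (natCast_div_mem_Icc _) hstep

lemma segment_subset_of_closedBall_subset {E : Type*} [SeminormedAddCommGroup E]
    [NormedSpace ℝ E] {C : Set E} {c c' a b : E} {ε δ : ℝ} (hC : closedBall c δ ⊆ C)
    (hεδ : 2 * ε ≤ δ) (hcc' : dist c c' ≤ ε) (ha : dist c a ≤ ε) (hb : dist c' b ≤ ε) :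
    segment ℝ a b ⊆ C := by
  have ha' : a ∈ closedBall c δ := by
    rw [mem_closedBall, dist_comm]
    linarith [dist_nonneg.trans hcc']
  have hb' : b ∈ closedBall c δ := by
    rw [mem_closedBall, dist_comm]
    linarith [dist_triangle c c' b]
  exact ((convex_closedBall c δ).segment_subset ha' hb').trans hC

theorem chain_of_collision_free_segments_along_path_general
    (d : ℕ)
    (Cfree : Set (EuclideanSpace ℝ (Fin d)))
    (σ : ℝ → EuclideanSpace ℝ (Fin d))
    (hcont : ContinuousOn σ (Icc (0 : ℝ) 1))
    (δ : ℝ)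
    (hclear : ∀ t ∈ Icc (0 : ℝ) 1, closedBall (σ t) δ ⊆ Cfree)
    (ε : ℝ) (hε : 0 < ε) (hεδ : 2 * ε ≤ δ)
    (S : Set (EuclideanSpace ℝ (Fin d)))
    (hdense : ∀ t ∈ Icc (0 : ℝ) 1, ∃ s ∈ S, dist (σ t) s ≤ ε) :
    ∃ (m : ℕ) (s : Fin (m + 1) → EuclideanSpace ℝ (Fin d)),
      (∀ i, s i ∈ S) ∧
      dist (s 0) (σ 0) ≤ ε ∧
      dist (s (Fin.last m)) (σ 1) ≤ ε ∧
      ∀ i : Fin m, segment ℝ (s i.castSucc) (s i.succ) ⊆ Cfree := by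
  obtain ⟨m, hm, hstep⟩ := exists_dist_uniform_partition_lt hcont hε
  choose s hsS hsσ using fun i : Fin (m + 1) => hdense _ (natCast_div_mem_Icc i)
  refine ⟨m, s, hsS, ?_, ?_, fun i => ?_⟩
  · simpa [dist_comm] using hsσ 0
  · simpa [dist_comm, hm.ne'] using hsσ (Fin.last m)
  · exact segment_subset_of_closedBall_subset (hclear _ (natCast_div_mem_Icc _)) hεδ
      (hstep i).le (hsσ _) (hsσ _)

/-- Deterministic core of tree joining: if `S` is `ε`-dense along a continuous path `σ`
with clearance `δ ≥ 2ε` in `C_free`, then there is a finite chain of points of `S`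
starting `ε`-close to `σ 0`, ending `ε`-close to `σ 1`, whose consecutive closed
segments are all contained in `C_free`. -/
theorem chain_of_collision_free_segments_along_path
    (d : ℕ) (hd : 1 ≤ d)
    (Cfree : Set (EuclideanSpace ℝ (Fin d)))
    (σ : ℝ → EuclideanSpace ℝ (Fin d))
    (hcont : ContinuousOn σ (Icc (0 : ℝ) 1))
    (δ : ℝ) (hδ : 0 < δ)
    (hclear : ∀ t ∈ Icc (0 : ℝ) 1, closedBall (σ t) δ ⊆ Cfree)
    (ε : ℝ) (hε : 0 < ε) (hεδ : 2 * ε ≤ δ)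
    (S : Set (EuclideanSpace ℝ (Fin d)))
    (hdense : ∀ t ∈ Icc (0 : ℝ) 1, ∃ s ∈ S, dist (σ t) s ≤ ε) :
    ∃ (m : ℕ) (s : Fin (m + 1) → EuclideanSpace ℝ (Fin d)),
      (∀ i, s i ∈ S) ∧
      dist (s 0) (σ 0) ≤ ε ∧
      dist (s (Fin.last m)) (σ 1) ≤ ε ∧
      ∀ i : Fin m, segment ℝ (s i.castSucc) (s i.succ) ⊆ Cfree :=
  chain_of_collision_free_segments_along_path_general d Cfree σ hcont δ hclear ε hε hεδ S hdense
end

section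
/- Let d ≥ 1, let C_free ⊆ ℝ^d, let σ : [0,1] → ℝ^d be a continuous path with clearance δ > 0 in C_free from q_init = σ(0) to q_goal = σ(1), and let ε > 0 with 2ε ≤ δ. Let μ be a Borel probability measure on ℝ^d such that μ(ball(σ(t), ε/2)) > 0 for every t ∈ [0,1], and let (X_n)_{n∈ℕ} be an i.i.d. sequence of random variables with common law μ on a probability space (Ω, P). Then P-almost surely there exist m ∈ ℕ and indices n₀, n₁, …, n_m ∈ ℕ such that dist(X_{n₀}, q_init) ≤ ε, dist(X_{n_m}, q_goal) ≤ ε, and for every i < m the closed segment [X_{n_i}, X_{n_{i+1}}] is contained in C_free. (This is an honest probabilistic-completeness statement corresponding to the paper's Theorem 2: given a feasible path with positive clearance, random sampling almost surely eventually produces a chain of collision-free straight-line connections from the initial configuration to the goal configuration.) -/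
open Set Metric Filter MeasureTheory ProbabilityTheory

/-!
By uniform continuity, the path is shadowed by finitely many points `σ (t₀), …, σ (t_m)`,
`t₀ = 0`, `t_m = 1`, with consecutive points less than `ε / 2` apart. By the second
Borel–Cantelli lemma every ball `ball (σ tⱼ) (ε / 2)` almost surely contains a sample.
Two consecutive such samples both lie in `closedBall (σ tᵢ) ε`, which is convex and
contained in `closedBall (σ tᵢ) δ ⊆ C_free`, so the segment between them is collision-free.
-/

theorem ContinuousOn.exists_partition_Icc_dist_lt {α : Type*} [PseudoMetricSpace α]
    {σ : ℝ → α} (hσ : ContinuousOn σ (Icc 0 1)) {r : ℝ} (hr : 0 < r) :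
    ∃ (m : ℕ) (t : Fin (m + 1) → ℝ), (∀ i, t i ∈ Icc 0 1) ∧ t 0 = 0 ∧ t (Fin.last m) = 1 ∧
      ∀ i : Fin m, dist (σ (t i.castSucc)) (σ (t i.succ)) < r := by
  obtain ⟨η, hη, hση⟩ :=
    Metric.uniformContinuousOn_iff.1 (isCompact_Icc.uniformContinuousOn_of_continuous hσ) r hr
  obtain ⟨k, hk⟩ := exists_nat_one_div_lt hη
  have hpos : (0 : ℝ) < k + 1 := by positivity
  have hgrid : ∀ i : Fin (k + 1 + 1), (i : ℝ) / (k + 1) ∈ Icc 0 1 := fun i =>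
    ⟨by positivity, (div_le_one hpos).2 (by exact_mod_cast Nat.lt_succ_iff.1 i.isLt)⟩
  refine ⟨k + 1, fun i => (i : ℝ) / (k + 1), hgrid, by simp, by simp [hpos.ne'], fun i => ?_⟩
  refine hση _ (hgrid _) _ (hgrid _) ?_
  have hstep : dist ((i : ℝ) / (k + 1)) ((i + 1 : ℝ) / (k + 1)) = 1 / (k + 1) := by
    rw [Real.dist_eq, ← sub_div, sub_add_cancel_left, abs_div, abs_neg, abs_one, abs_of_pos hpos]
  simpa [hstep] using hk

theorem ProbabilityTheory.iIndepFun.ae_exists_mem {Ω E : Type*} [MeasurableSpace Ω]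
    [MeasurableSpace E] {P : Measure Ω} {μ : Measure E} {X : ℕ → Ω → E}
    (hindep : iIndepFun X P) (hmeas : ∀ n, Measurable (X n)) (hlaw : ∀ n, P.map (X n) = μ)
    {B : Set E} (hB : MeasurableSet B) (hpos : 0 < μ B) :
    ∀ᵐ ω ∂P, ∃ n, X n ω ∈ B := by
  have := hindep.isProbabilityMeasure
  have hsm : ∀ n, MeasurableSet (X n ⁻¹' B) := fun n => hmeas n hB
  have hind : iIndepSet (fun n => X n ⁻¹' B) P :=
    (iIndepSet_iff_meas_biInter hsm).2 fun _ => hindep.meas_biInter fun _ _ => ⟨B, hB, rfl⟩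
  have hsum : ∑' n, P (X n ⁻¹' B) = ⊤ := by
    simp_rw [← Measure.map_apply (hmeas _) hB, hlaw]
    exact ENNReal.tsum_const_eq_top_of_ne_zero hpos.ne'
  have hlimsup : ∀ᵐ ω ∂P, ω ∈ limsup (fun n => X n ⁻¹' B) atTop := by
    rw [ae_mem_iff_measure_eq (MeasurableSet.measurableSet_limsup hsm).nullMeasurableSet,
      measure_univ]
    exact measure_limsup_eq_one hsm hind hsum
  filter_upwards [hlimsup] with ω hω
  exact (mem_limsup_iff_frequently_mem.1 hω).exists

theorem iid_sampling_probabilistic_completeness_general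
    (d : ℕ)
    (Cfree : Set (EuclideanSpace ℝ (Fin d)))
    (σ : ℝ → EuclideanSpace ℝ (Fin d))
    (hcont : ContinuousOn σ (Icc (0 : ℝ) 1))
    (δ : ℝ)
    (hclear : ∀ t ∈ Icc (0 : ℝ) 1, closedBall (σ t) δ ⊆ Cfree)
    (qinit qgoal : EuclideanSpace ℝ (Fin d))
    (hinit : σ 0 = qinit) (hgoal : σ 1 = qgoal)
    (ε : ℝ) (hε : 0 < ε) (hεδ : 2 * ε ≤ δ)
    (μ : Measure (EuclideanSpace ℝ (Fin d)))
    (hμ : ∀ t ∈ Icc (0 : ℝ) 1, 0 < μ (ball (σ t) (ε / 2)))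
    (Ω : Type*) [MeasurableSpace Ω]
    (P : Measure Ω)
    (X : ℕ → Ω → EuclideanSpace ℝ (Fin d))
    (hindep : iIndepFun X P)
    (hmeas : ∀ n, Measurable (X n))
    (hlaw : ∀ n, Measure.map (X n) P = μ) :
    ∀ᵐ ω ∂P, ∃ (m : ℕ) (n : Fin (m + 1) → ℕ),
      dist (X (n 0) ω) qinit ≤ ε ∧
      dist (X (n (Fin.last m)) ω) qgoal ≤ ε ∧
      ∀ i : Fin m,
        segment ℝ (X (n i.castSucc) ω) (X (n i.succ) ω) ⊆ Cfree := by
  obtain ⟨m, t, ht, ht0, htm, hstep⟩ := hcont.exists_partition_Icc_dist_lt (half_pos hε)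
  have hhit : ∀ᵐ ω ∂P, ∀ j, ∃ n, X n ω ∈ ball (σ (t j)) (ε / 2) :=
    ae_all_iff.2 fun j => hindep.ae_exists_mem hmeas hlaw measurableSet_ball (hμ _ (ht j))
  filter_upwards [hhit] with ω hω
  choose n hn using hω
  have hnear : ∀ j, dist (X (n j) ω) (σ (t j)) ≤ ε := fun j =>
    (mem_ball.1 (hn j)).le.trans (by linarith)
  refine ⟨m, n, hinit ▸ ht0 ▸ hnear 0, hgoal ▸ htm ▸ hnear (Fin.last m), fun i => ?_⟩
  have hnext : dist (X (n i.succ) ω) (σ (t i.castSucc)) ≤ ε := by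
    calc _ ≤ dist (X (n i.succ) ω) (σ (t i.succ)) + dist (σ (t i.succ)) (σ (t i.castSucc)) :=
          dist_triangle _ _ _
      _ ≤ ε / 2 + ε / 2 := by
          rw [dist_comm (σ _)]
          exact add_le_add (mem_ball.1 (hn _)).le (hstep i).le
      _ = ε := add_halves ε
  calc segment ℝ (X (n i.castSucc) ω) (X (n i.succ) ω) ⊆ closedBall (σ (t i.castSucc)) ε :=
        (convex_closedBall _ _).segment_subset (hnear _) hnext
    _ ⊆ closedBall (σ (t i.castSucc)) δ := closedBall_subset_closedBall (by linarith)
    _ ⊆ Cfree := hclear _ (ht _)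

/-- Probabilistic completeness: given a continuous feasible path with clearance
`δ ≥ 2ε` in `C_free`, and i.i.d. samples whose law charges every `ε/2`-ball around
path points, almost surely some finite chain of samples connects the initial
configuration to the goal via collision-free straight segments. -/
theorem iid_sampling_probabilistic_completeness
    (d : ℕ) (hd : 1 ≤ d)
    (Cfree : Set (EuclideanSpace ℝ (Fin d)))
    (σ : ℝ → EuclideanSpace ℝ (Fin d))
    (hcont : ContinuousOn σ (Icc (0 : ℝ) 1))
    (δ : ℝ) (hδ : 0 < δ)
    (hclear : ∀ t ∈ Icc (0 : ℝ) 1, closedBall (σ t) δ ⊆ Cfree)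
    (qinit qgoal : EuclideanSpace ℝ (Fin d))
    (hinit : σ 0 = qinit) (hgoal : σ 1 = qgoal)
    (ε : ℝ) (hε : 0 < ε) (hεδ : 2 * ε ≤ δ)
    (μ : Measure (EuclideanSpace ℝ (Fin d))) [IsProbabilityMeasure μ]
    (hμ : ∀ t ∈ Icc (0 : ℝ) 1, 0 < μ (ball (σ t) (ε / 2)))
    (Ω : Type*) [MeasurableSpace Ω]
    (P : Measure Ω) [IsProbabilityMeasure P]
    (X : ℕ → Ω → EuclideanSpace ℝ (Fin d))
    (hindep : iIndepFun X P)
    (hmeas : ∀ n, Measurable (X n))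
    (hlaw : ∀ n, Measure.map (X n) P = μ) :
    ∀ᵐ ω ∂P, ∃ (m : ℕ) (n : Fin (m + 1) → ℕ),
      dist (X (n 0) ω) qinit ≤ ε ∧
      dist (X (n (Fin.last m)) ω) qgoal ≤ ε ∧
      ∀ i : Fin m,
        segment ℝ (X (n i.castSucc) ω) (X (n i.succ) ω) ⊆ Cfree :=
  iid_sampling_probabilistic_completeness_general d Cfree σ hcont δ hclear qinit qgoal hinit hgoal ε
    hε hεδ μ hμ Ω P X hindep hmeas hlaw
end
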